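/- arXiv:2409.18927 — 3 statements merged into one kernel-verified Lean document; each statement's English description precedes it below -/
import Mathlib

section
/- For a ∈ ℂ with a ≠ 0, 1, the plane affine curve defined by x^3 - 3atx + a t^3 - a + a^2 = 0 in ℂ² (coordinates x, t) is smooth, i.e., the polynomial f = x^3 - 3atx + a t^3 - a + a^2 and its partial derivatives ∂f/∂x, ∂f/∂t have no common zero in ℂ². -/
/-- for `a ≠ 0, 1`, the affine plane curve
`f = x^3 - 3atx + a t^3 - a + a^2 = 0` is smooth: `f`, `∂f/∂x` and `∂f/∂t` have
no common zero in `ℂ²`. -/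
theorem stmt2 (a : ℂ) (h0 : a ≠ 0) (h1 : a ≠ 1) :
    ∀ x t : ℂ, ¬ (x ^ 3 - 3 * a * t * x + a * t ^ 3 - a + a ^ 2 = 0 ∧
      3 * x ^ 2 - 3 * a * t = 0 ∧ -3 * a * x + 3 * a * t ^ 2 = 0) := by
  rintro x t ⟨hf, h2, h3⟩
  have h3' : (3 * a) * (t ^ 2 - x) = 0 := by linear_combination h3
  have h3a : (3 : ℂ) * a ≠ 0 := by simp [h0]
  have hx : x = t ^ 2 := ((sub_eq_zero.mp ((mul_eq_zero.mp h3').resolve_left h3a))).symm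
  subst hx
  have h2' : (3 : ℂ) * (t * (t ^ 3 - a)) = 0 := by linear_combination h2
  rcases mul_eq_zero.mp h2' with h | h
  · norm_num at h
  rcases mul_eq_zero.mp h with ht | ht
  · subst ht
    have : a * (a - 1) = 0 := by linear_combination hf
    rcases mul_eq_zero.mp this with h | h
    · exact h0 h
    · exact h1 (sub_eq_zero.mp h)
  · have ha : t ^ 3 = a := sub_eq_zero.mp ht
    exact h0 (by linear_combination -hf + (t ^ 3 - a) * ht)
end

section
/- Up to simultaneous conjugation in S₃, there are exactly two 4-tuples (σ₀, τ₁, τ₂, σ∞) of permutations in S₃ such that σ₀ and σ∞ are 3-cycles, τ₁ and τ₂ are transpositions, σ₀τ₁τ₂σ∞ = 1, and the subgroup generated by the tuple acts transitively on {1,2,3}; representatives are ((123),(12),(23),(123)) and ((123),(12),(12),(132)). -/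
open Equiv

/-- A Hurwitz datum for a connected triple cover of `ℙ¹` branched at four points with
branching cycle types `(3-cycle, transposition, transposition, 3-cycle)` whose product
is the identity and which generates a transitive subgroup of `S₃`. -/
def HurwitzTuple (σ0 τ1 τ2 σi : Perm (Fin 3)) : Prop :=
  σ0.IsThreeCycle ∧ τ1.IsSwap ∧ τ2.IsSwap ∧ σi.IsThreeCycle ∧
  σ0 * τ1 * τ2 * σi = 1 ∧
  ∀ i j : Fin 3, ∃ g ∈ Subgroup.closure ({σ0, τ1, τ2, σi} : Set (Perm (Fin 3))), g i = j

/-- Simultaneous conjugacy of two 4-tuples of permutations. -/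
def SimConj (p q : Perm (Fin 3) × Perm (Fin 3) × Perm (Fin 3) × Perm (Fin 3)) : Prop :=
  ∃ g : Perm (Fin 3), g * p.1 * g⁻¹ = q.1 ∧ g * p.2.1 * g⁻¹ = q.2.1 ∧
    g * p.2.2.1 * g⁻¹ = q.2.2.1 ∧ g * p.2.2.2 * g⁻¹ = q.2.2.2

private abbrev rr : Perm (Fin 3) := finRotate 3

lemma hstep1 : ∀ σ : Perm (Fin 3), σ ≠ 1 → σ ^ 3 = 1 →
    ∃ g : Perm (Fin 3), g * σ * g⁻¹ = rr := by decide

lemma hstep2 : ∀ τ : Perm (Fin 3), τ ≠ 1 → τ ^ 2 = 1 →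
    ∃ g : Perm (Fin 3), g * rr * g⁻¹ = rr ∧ g * τ * g⁻¹ = swap 0 1 := by decide

lemma hstep3 : ∀ τ σ : Perm (Fin 3), (τ ≠ 1 ∧ τ ^ 2 = 1 ∧ σ ≠ 1 ∧ σ ^ 3 = 1 ∧
    rr * swap 0 1 * τ * σ = 1) →
    (τ = swap 1 2 ∧ σ = rr) ∨ (τ = swap 0 1 ∧ σ = rr⁻¹) := by decide

lemma myConjComp (g2 g1 x : Perm (Fin 3)) :
    (g2 * g1) * x * (g2 * g1)⁻¹ = g2 * (g1 * x * g1⁻¹) * g2⁻¹ := by group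

lemma three_cycle_ne_one {σ : Perm (Fin 3)} (h : σ.IsThreeCycle) : σ ≠ 1 :=
  fun e => by simp [e, Equiv.Perm.IsThreeCycle] at h

lemma three_cycle_pow {σ : Perm (Fin 3)} (h : σ.IsThreeCycle) : σ ^ 3 = 1 :=
  orderOf_dvd_iff_pow_eq_one.mp (by rw [h.orderOf])

lemma swap_ne_one' {τ : Perm (Fin 3)} (h : τ.IsSwap) : τ ≠ 1 := by
  obtain ⟨x, y, hxy, rfl⟩ := h
  intro e
  have := congrArg (fun f => f x) e
  simp at this
  exact hxy this.symm

lemma swap_pow {τ : Perm (Fin 3)} (h : τ.IsSwap) : τ ^ 2 = 1 := by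
  obtain ⟨x, y, hxy, rfl⟩ := h
  rw [sq, swap_mul_self]

lemma rr_eq : rr = swap 0 2 * swap 0 1 := by decide

lemma rr_isThreeCycle : (rr : Perm (Fin 3)).IsThreeCycle := by
  rw [rr_eq]
  exact Equiv.Perm.isThreeCycle_swap_mul_swap_same (by decide) (by decide) (by decide)

lemma swap_isSwap (a b : Fin 3) (h : a ≠ b) : (swap a b).IsSwap := ⟨a, b, h, rfl⟩

lemma rr_trans : ∀ i j : Fin 3, ∃ k : Fin 3, (rr ^ (k : ℕ)) i = j := by decide

lemma transitive_of_rr (S : Set (Perm (Fin 3))) (hS : rr ∈ S) :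
    ∀ i j : Fin 3, ∃ g ∈ Subgroup.closure S, g i = j := by
  intro i j
  obtain ⟨k, hk⟩ := rr_trans i j
  exact ⟨rr ^ (k : ℕ), pow_mem (Subgroup.subset_closure hS) _, hk⟩

/-- up to simultaneous conjugation in `S₃` there are exactly two such tuples,
with representatives `((123),(12),(23),(123))` and `((123),(12),(12),(132))`. -/
theorem stmt6 :
    HurwitzTuple (finRotate 3) (swap 0 1) (swap 1 2) (finRotate 3) ∧
    HurwitzTuple (finRotate 3) (swap 0 1) (swap 0 1) (finRotate 3)⁻¹ ∧
    ¬ SimConj (finRotate 3, swap 0 1, swap 1 2, finRotate 3)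
        (finRotate 3, swap 0 1, swap 0 1, (finRotate 3)⁻¹) ∧
    ∀ p : Perm (Fin 3) × Perm (Fin 3) × Perm (Fin 3) × Perm (Fin 3),
      HurwitzTuple p.1 p.2.1 p.2.2.1 p.2.2.2 →
        SimConj p (finRotate 3, swap 0 1, swap 1 2, finRotate 3) ∨
        SimConj p (finRotate 3, swap 0 1, swap 0 1, (finRotate 3)⁻¹) := by
  refine ⟨⟨rr_isThreeCycle, swap_isSwap 0 1 (by decide), swap_isSwap 1 2 (by decide),
      rr_isThreeCycle, by decide, transitive_of_rr _ (Or.inl rfl)⟩,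
    ⟨rr_isThreeCycle, swap_isSwap 0 1 (by decide), swap_isSwap 0 1 (by decide),
      rr_isThreeCycle.inv, by decide, transitive_of_rr _ (Or.inl rfl)⟩,
    ?_, ?_⟩
  · intro ⟨g, h1, h2, h3, h4⟩
    revert h1 h2 h3 h4
    revert g
    decide
  · rintro ⟨σ0, τ1, τ2, σi⟩ ⟨h0, h1, h2, hi, hprod, -⟩
    simp only at h0 h1 h2 hi hprod ⊢
    obtain ⟨g1, hg1⟩ := hstep1 σ0 (three_cycle_ne_one h0) (three_cycle_pow h0)
    obtain ⟨g2, hg2r, hg2t⟩ := hstep2 (g1 * τ1 * g1⁻¹)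
      (by intro e; exact swap_ne_one' h1 (by
        have := congrArg (fun x => g1⁻¹ * x * g1) e; group at this; simpa using this))
      (by rw [conj_pow, swap_pow h1, mul_one, mul_inv_cancel])
    set g := g2 * g1 with hg
    have e0 : g * σ0 * g⁻¹ = rr := by rw [hg, myConjComp, hg1, hg2r]
    have e1 : g * τ1 * g⁻¹ = swap 0 1 := by rw [hg, myConjComp, hg2t]
    have eprod : rr * swap 0 1 * (g * τ2 * g⁻¹) * (g * σi * g⁻¹) = 1 := by
      rw [← e0, ← e1]
      have : g * σ0 * g⁻¹ * (g * τ1 * g⁻¹) * (g * τ2 * g⁻¹) * (g * σi * g⁻¹)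
          = g * (σ0 * τ1 * τ2 * σi) * g⁻¹ := by group
      rw [this, hprod]; group
    have h2' : (g * τ2 * g⁻¹) ≠ 1 := by
      intro e; exact swap_ne_one' h2 (by
        have := congrArg (fun x => g⁻¹ * x * g) e; group at this; simpa using this)
    have h2p : (g * τ2 * g⁻¹) ^ 2 = 1 := by
      rw [conj_pow, swap_pow h2, mul_one, mul_inv_cancel]
    have hi' : (g * σi * g⁻¹) ≠ 1 := by
      intro e; exact three_cycle_ne_one hi (by
        have := congrArg (fun x => g⁻¹ * x * g) e; group at this; simpa using this)
    have hip : (g * σi * g⁻¹) ^ 3 = 1 := by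
      rw [conj_pow, three_cycle_pow hi, mul_one, mul_inv_cancel]
    rcases hstep3 _ _ ⟨h2', h2p, hi', hip, eprod⟩ with ⟨e2, ei⟩ | ⟨e2, ei⟩
    · exact Or.inl ⟨g, e0, e1, e2, ei⟩
    · exact Or.inr ⟨g, e0, e1, e2, ei⟩
end

section
/- The J-invariant of the elliptic curve E_a with affine Weierstrass-type equation (a² - a)z² + 3a x z + a z = x³ equals 27a(a + 8)³ / (a - 1)³, for a ≠ 0, 1. -/
/-- the elliptic curve `E_a : (a²-a)z² + 3axz + az = x³` is isomorphic to the
Weierstrass curve `Y² + 3aXY + (a³-a²)Y = X³`, and its `J`-invariant, i.e. `c₄³/Δ`, equals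
`27a(a+8)³/(a-1)³` for `a ≠ 0, 1`: the curve is nonsingular (`Δ ≠ 0`) and
`c₄³ = J·Δ`. -/
theorem stmt10 (a : ℂ) (h0 : a ≠ 0) (h1 : a ≠ 1) :
    let W : WeierstrassCurve ℂ := ⟨3 * a, 0, a ^ 3 - a ^ 2, 0, 0⟩
    W.Δ ≠ 0 ∧ W.c₄ ^ 3 = (27 * a * (a + 8) ^ 3 / (a - 1) ^ 3) * W.Δ := by
  intro W
  have ha1 : a - 1 ≠ 0 := sub_ne_zero.mpr h1
  have hΔ : W.Δ = 27 * a ^ 8 * (a - 1) ^ 3 := by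
    simp only [W, WeierstrassCurve.Δ, WeierstrassCurve.b₂, WeierstrassCurve.b₄,
      WeierstrassCurve.b₆, WeierstrassCurve.b₈]
    ring
  constructor
  · rw [hΔ]
    exact mul_ne_zero (mul_ne_zero (by norm_num) (pow_ne_zero _ h0)) (pow_ne_zero _ ha1)
  · have hc : W.c₄ = 9 * a ^ 3 * (a + 8) := by
      simp only [W, WeierstrassCurve.c₄, WeierstrassCurve.b₂, WeierstrassCurve.b₄]
      ring
    rw [hc, hΔ]
    field_simp
    ring
end
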